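/- arXiv:2307.14670 — 4 statements merged into one kernel-verified Lean document; each statement's English description precedes it below -/
import Mathlib

section
/- Let A₃ < 0, A₂, A₁, A₀ real, and consider the depressed cubic ν³ + pν + q = 0 with p = -(3A₁A₃+A₂²)/(3A₃²). If the discriminant Δ = -4p³ - 27q² < 0 and p < 0, then the real root ν₁ = (-q/2 + √(q²/4+p³/27))^{1/3} + (-q/2 - √(q²/4+p³/27))^{1/3} satisfies ν₁² ≥ -p/3. -/
/-! The two Cardano radicands are `-q/2 ± √D` with `D = q²/4 + p³/27`, so their product is
`q²/4 - D = (-p/3)³`. Cube roots being unique over `ℝ`, the cube roots `u, v` satisfy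
`u v = -p/3`, and then `(u + v)² ≥ 4 u v = -4p/3 ≥ -p/3` because `p < 0`. -/

namespace Cardano

lemma radicand_mul_radicand {p q : ℝ} (hD : 0 ≤ q ^ 2 / 4 + p ^ 3 / 27) :
    (-q / 2 + √(q ^ 2 / 4 + p ^ 3 / 27)) * (-q / 2 - √(q ^ 2 / 4 + p ^ 3 / 27)) = (-p / 3) ^ 3 := by
  have hsq := Real.sq_sqrt hD
  linear_combination -hsq

lemma mul_eq_of_cube_eq_radicands {p q u v : ℝ} (hD : 0 ≤ q ^ 2 / 4 + p ^ 3 / 27)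
    (hu : u ^ 3 = -q / 2 + √(q ^ 2 / 4 + p ^ 3 / 27))
    (hv : v ^ 3 = -q / 2 - √(q ^ 2 / 4 + p ^ 3 / 27)) :
    u * v = -p / 3 := by
  have hcube : (u * v) ^ 3 = (-p / 3) ^ 3 := by
    rw [mul_pow, hu, hv, radicand_mul_radicand hD]
  exact (Odd.pow_inj (by decide)).mp hcube

end Cardano

theorem cardano_real_root_bound_general (A₁ A₂ A₃ q : ℝ) :
    let p := -(3*A₁*A₃ + A₂^2)/(3*A₃^2)
    ∀ u v : ℝ, -4*p^3 - 27*q^2 < 0 → p < 0 →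
      u^3 = -q/2 + Real.sqrt (q^2/4 + p^3/27) →
      v^3 = -q/2 - Real.sqrt (q^2/4 + p^3/27) →
      (u+v)^2 ≥ -p/3 := by
  intro p u v hΔ hp hu hv
  have hD : 0 ≤ q ^ 2 / 4 + p ^ 3 / 27 := by linarith
  have huv : u * v = -p / 3 := Cardano.mul_eq_of_cube_eq_radicands hD hu hv
  calc (u + v) ^ 2 ≥ 4 * u * v := four_mul_le_sq_add u v
    _ = -4 * p / 3 := by linear_combination 4 * huv
    _ ≥ -p / 3 := by linarith

/-- For A₃ < 0 and p = -(3A₁A₃+A₂²)/(3A₃²), if the discriminant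
Δ = -4p³ - 27q² < 0 and p < 0, then the real Cardano root
ν₁ = (-q/2+√(q²/4+p³/27))^{1/3} + (-q/2-√(q²/4+p³/27))^{1/3}
satisfies ν₁² ≥ -p/3. -/
theorem cardano_real_root_bound (A₀ A₁ A₂ A₃ q : ℝ) (hA₃ : A₃ < 0) :
    let p := -(3*A₁*A₃ + A₂^2)/(3*A₃^2)
    ∀ u v : ℝ, -4*p^3 - 27*q^2 < 0 → p < 0 →
      u^3 = -q/2 + Real.sqrt (q^2/4 + p^3/27) →
      v^3 = -q/2 - Real.sqrt (q^2/4 + p^3/27) →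
      (u+v)^2 ≥ -p/3 :=
  cardano_real_root_bound_general A₁ A₂ A₃ q
end

section
/- Suppose k₀, k₁, k₂ are the three roots of A₃k³ + Bk² - A₁k - C = 0 with A₃ ≠ 0 (so k₀+k₁+k₂ = -B/A₃ and k₀k₁+k₁k₂+k₂k₀ = -A₁/A₃). If complex numbers b, c satisfy -A₃c - i(A₃kⱼ + B)b + (A₃kⱼ² + Bkⱼ - A₁)a = 0 for j = 1 and j = 2 with k₁ ≠ k₂, then b = ik₀·a and c = -k₀²·a. -/
/-!
Comparing coefficients in `A₃k³ + Bk² - A₁k - C = A₃(k - k₀)(k - k₁)(k - k₂)` gives Vieta's formulas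
for `B` and `A₁`. With them, the condition at the root `k₁` becomes
`c - i(k₀ + k₂)b - k₀k₂a = 0`, and symmetrically at `k₂`. Subtracting the two conditions leaves
`(k₁ - k₂)(ib + k₀a) = 0`, so `b = ik₀a` because `i² = -1`; substituting back gives `c = -k₀²a`.
-/

section

variable {R : Type*} [CommRing R] [IsDomain R]

/-- Only the values at `1`, `0` and `-1` are used, which forces a division by `2`. -/
theorem vieta_of_cubic_eq [NeZero (2 : R)] {A₃ B A₁ C k₀ k₁ k₂ : R}
    (h : ∀ k : R, A₃*k^3 + B*k^2 - A₁*k - C = A₃*(k-k₀)*(k-k₁)*(k-k₂)) :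
    B = -A₃*(k₀+k₁+k₂) ∧ A₁ = -A₃*(k₀*k₁+k₁*k₂+k₂*k₀) := by
  have h₁ := h 1
  have h₀ := h 0
  have hm₁ := h (-1)
  constructor
  · apply mul_left_cancel₀ (two_ne_zero : (2 : R) ≠ 0)
    linear_combination h₁ + hm₁ - 2 * h₀
  · apply mul_left_cancel₀ (two_ne_zero : (2 : R) ≠ 0)
    linear_combination hm₁ - h₁

/-- At a root `k` of the cubic, `A₃k² + Bk - A₁` is `A₃` times the product of the other two roots
and `A₃k + B` is `-A₃` times their sum. -/
theorem removability_at_root_iff {A₃ B A₁ k₀ k q i a b c : R} (hA₃ : A₃ ≠ 0)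
    (hB : B = -A₃*(k₀+k+q)) (hA₁ : A₁ = -A₃*(k₀*k+k*q+q*k₀)) :
    -A₃*c - i*(A₃*k + B)*b + (A₃*k^2 + B*k - A₁)*a = 0 ↔ c - i*(k₀+q)*b - k₀*q*a = 0 := by
  subst hB hA₁
  rw [show -A₃*c - i*(A₃*k + -A₃*(k₀+k+q))*b + (A₃*k^2 + -A₃*(k₀+k+q)*k
      - -A₃*(k₀*k+k*q+q*k₀))*a = -A₃ * (c - i*(k₀+q)*b - k₀*q*a) by ring]
  simp [hA₃]

theorem eq_of_reduced_removability {i k₀ k₁ k₂ a b c : R} (hi : i^2 = -1) (hne : k₁ ≠ k₂)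
    (h₁ : c - i*(k₀+k₂)*b - k₀*k₂*a = 0) (h₂ : c - i*(k₀+k₁)*b - k₀*k₁*a = 0) :
    b = i*k₀*a ∧ c = -k₀^2*a := by
  have hib : i*b + k₀*a = 0 := by
    refine (mul_eq_zero.mp ?_).resolve_left (sub_ne_zero.mpr hne)
    linear_combination h₁ - h₂
  have hb : b = i*k₀*a := by linear_combination -i*hib + b*hi
  refine ⟨hb, ?_⟩
  linear_combination h₁ + i*(k₀+k₂)*hb + (k₀+k₂)*k₀*a*hi

end

/-- D-N map linear algebra for the third-order model: if k₀,k₁,k₂ are the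
roots of A₃k³+Bk²-A₁k-C (A₃ ≠ 0) and b,c satisfy the removability conditions
at k₁ ≠ k₂, then b = ik₀a and c = -k₀²a. -/
theorem dn_map_third_order (A₃ B A₁ C : ℂ) (k₀ k₁ k₂ a b c : ℂ)
    (hA₃ : A₃ ≠ 0)
    (hroots : ∀ k : ℂ, A₃*k^3 + B*k^2 - A₁*k - C = A₃*(k-k₀)*(k-k₁)*(k-k₂))
    (hne : k₁ ≠ k₂)
    (h1 : -A₃*c - Complex.I*(A₃*k₁ + B)*b + (A₃*k₁^2 + B*k₁ - A₁)*a = 0)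
    (h2 : -A₃*c - Complex.I*(A₃*k₂ + B)*b + (A₃*k₂^2 + B*k₂ - A₁)*a = 0) :
    b = Complex.I*k₀*a ∧ c = -k₀^2*a := by
  obtain ⟨hB, hA₁⟩ := vieta_of_cubic_eq hroots
  have r₁ := (removability_at_root_iff hA₃ hB hA₁).mp h1
  have r₂ := (removability_at_root_iff (k₀ := k₀) (q := k₁) hA₃ (by rw [hB]; ring)
    (by rw [hA₁]; ring)).mp h2
  exact eq_of_reduced_removability Complex.I_sq hne r₁ r₂
end

section
/- Let A₋₂ > 0, A₁ > 0, A₀, A₂ real. Define β± = (-(A₂+A₀A₋₂) ± √((A₂+A₀A₋₂)² + A₁²A₋₂))/(A₁A₋₂) and ω_cr± = A₁β±/2 + A₀. If ω_cr⁻ ≤ s ≤ ω_cr⁺ and Δ = A₁² + 4(A₀-s)(A₂+sA₋₂) ≥ 0 with A₂+sA₋₂ ≠ 0, then the root k₋ = (A₁ - √Δ)/(2(A₂+sA₋₂)) satisfies β₋ ≤ k₋ ≤ β₊. -/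
/-!
On the dispersion curve `(A₂ + s A₋₂) k² - A₁ k - A₀ + s = 0` the quadratic
`A₁ A₋₂ k² + 2 (A₂ + A₀ A₋₂) k - A₁` cutting out `[β₋, β₊]` factors as
`(2 (A₂ + s A₋₂) k - A₁) (1 + A₋₂ k²)`. At the root `k₋` the first factor is `-√Δ ≤ 0` and the
second is positive, so `k₋` lies between the roots `β±` of that quadratic.
-/

open Real

theorem le_and_le_of_quadratic_nonpos {a b c k : ℝ} (ha : 0 < a)
    (hk : a * k ^ 2 + 2 * b * k - c ≤ 0) :
    (-b - √(b ^ 2 + a * c)) / a ≤ k ∧ k ≤ (-b + √(b ^ 2 + a * c)) / a := by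
  have hsq : (a * k + b) ^ 2 ≤ b ^ 2 + a * c := by
    nlinarith [mul_nonpos_of_nonneg_of_nonpos ha.le hk]
  obtain ⟨hlo, hhi⟩ := abs_le.mp (abs_le_sqrt hsq)
  constructor
  · rw [div_le_iff₀ ha]
    linarith
  · rw [le_div_iff₀ ha]
    linarith

theorem boundary_quadratic_eq_mul_of_dispersion {Am2 A₀ A₁ A₂ s k : ℝ}
    (hk : (A₂ + s * Am2) * k ^ 2 - A₁ * k - A₀ + s = 0) :
    A₁ * Am2 * k ^ 2 + 2 * (A₂ + A₀ * Am2) * k - A₁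
      = (2 * (A₂ + s * Am2) * k - A₁) * (1 + Am2 * k ^ 2) := by
  linear_combination (-2 * Am2 * k) * hk

theorem dispersion_root_minus {A₀ A₁ C s : ℝ} (hC : C ≠ 0)
    (hΔ : 0 ≤ A₁ ^ 2 + 4 * (A₀ - s) * C) :
    let k := (A₁ - √(A₁ ^ 2 + 4 * (A₀ - s) * C)) / (2 * C)
    C * k ^ 2 - A₁ * k - A₀ + s = 0 ∧ 2 * C * k - A₁ = -√(A₁ ^ 2 + 4 * (A₀ - s) * C) := by
  intro k
  have hsqrt := sq_sqrt hΔ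
  simp only [k]
  generalize √(A₁ ^ 2 + 4 * (A₀ - s) * C) = d at hsqrt ⊢
  constructor
  · field_simp
    linear_combination hsqrt
  · field_simp
    ring

/-- For the nonlocal second-order model with A₋₂ > 0, A₁ > 0: if
ω_cr⁻ ≤ s ≤ ω_cr⁺ and Δ ≥ 0 with A₂+sA₋₂ ≠ 0, then the root
k₋ = (A₁-√Δ)/(2(A₂+sA₋₂)) satisfies β₋ ≤ k₋ ≤ β₊. -/
theorem nonlocal_root_in_interval (Am2 A₀ A₁ A₂ s : ℝ)
    (hAm2 : 0 < Am2) (hA₁ : 0 < A₁) :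
    let βp := (-(A₂ + A₀*Am2) + Real.sqrt ((A₂ + A₀*Am2)^2 + A₁^2*Am2))/(A₁*Am2)
    let βm := (-(A₂ + A₀*Am2) - Real.sqrt ((A₂ + A₀*Am2)^2 + A₁^2*Am2))/(A₁*Am2)
    let ωp := A₁*βp/2 + A₀
    let ωm := A₁*βm/2 + A₀
    let Δ := A₁^2 + 4*(A₀ - s)*(A₂ + s*Am2)
    ωm ≤ s → s ≤ ωp → 0 ≤ Δ → A₂ + s*Am2 ≠ 0 →
      βm ≤ (A₁ - Real.sqrt Δ)/(2*(A₂ + s*Am2)) ∧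
      (A₁ - Real.sqrt Δ)/(2*(A₂ + s*Am2)) ≤ βp := by
  intro βp βm ωp ωm Δ _ _ hΔ hC
  obtain ⟨hroot, hslope⟩ := dispersion_root_minus hC hΔ
  have hq : A₁ * Am2 * ((A₁ - √Δ) / (2 * (A₂ + s * Am2))) ^ 2
      + 2 * (A₂ + A₀ * Am2) * ((A₁ - √Δ) / (2 * (A₂ + s * Am2))) - A₁ ≤ 0 := by
    rw [boundary_quadratic_eq_mul_of_dispersion (s := s) hroot, hslope]
    exact mul_nonpos_of_nonpos_of_nonneg (neg_nonpos.mpr (sqrt_nonneg Δ)) (by positivity)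
  have hdisc : (A₂ + A₀ * Am2) ^ 2 + A₁ * Am2 * A₁ = (A₂ + A₀ * Am2) ^ 2 + A₁ ^ 2 * Am2 := by ring
  simpa only [hdisc] using le_and_le_of_quadratic_nonpos (mul_pos hA₁ hAm2) hq
end

section
/- For 0 < ω₀ < 1/2 and 0 < ξ < c_g(ω₀) = (1-4ω₀² + √(1-4ω₀²))/2, the root k₂ = (1-√(1-4ω₀²))/(2ω₀) of k/(1+k²) = ω₀ satisfies k₂ < ρ₁(ξ), where ρ₁(ξ) = √(-1 + (√(1+8ξ)-1)/(2ξ)) is the positive real BBM saddle point; equivalently, the pole k₂ lies inside the saddle value exactly when ξ < ω'(k₂). -/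
/-!
Writing `a = ρ₁(t)²`, the defining relation of the saddle point is `t (1 + a)² = 1 - a`, i.e.
`ω'(√a) = t`. Since `(1 - b) - t (1 + b)² = (a - b) (1 + t (2 + a + b))`, for `b = k²` the sign of
`ω'(k) - t` is the sign of `a - k²`, which gives the equivalence. For the pole,
`s = √(1 - 4ω₀²)` gives `k₂² = (1 - s)/(1 + s)`, hence `ω'(k₂) = (s² + s)/2 = c_g(ω₀)`.
-/

open Real

/-- The square `ρ₁(t)²` of the BBM saddle point. -/
noncomputable def bbmSaddleSq (t : ℝ) : ℝ := -1 + (√(1 + 8 * t) - 1) / (2 * t)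

lemma neg_one_le_bbmSaddleSq {t : ℝ} (ht : 0 ≤ t) : -1 ≤ bbmSaddleSq t := by
  have : 1 ≤ √(1 + 8 * t) := one_le_sqrt.2 (by linarith)
  have : 0 ≤ (√(1 + 8 * t) - 1) / (2 * t) := div_nonneg (by linarith) (by linarith)
  unfold bbmSaddleSq
  linarith

lemma mul_one_add_bbmSaddleSq_sq {t : ℝ} (ht : 0 < t) :
    t * (1 + bbmSaddleSq t) ^ 2 = 1 - bbmSaddleSq t := by
  have hr : √(1 + 8 * t) ^ 2 = 1 + 8 * t := sq_sqrt (by linarith)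
  unfold bbmSaddleSq
  set r := √(1 + 8 * t)
  field_simp
  linear_combination hr

lemma lt_iff_lt_of_mul_one_add_sq_eq {t a b : ℝ} (ht : 0 ≤ t) (ha : -1 ≤ a) (hb : 0 ≤ b)
    (hta : t * (1 + a) ^ 2 = 1 - a) : b < a ↔ t < (1 - b) / (1 + b) ^ 2 := by
  have hfactor : 1 - b - t * (1 + b) ^ 2 = (a - b) * (1 + t * (2 + a + b)) := by
    linear_combination -hta
  have hpos : 0 < 1 + t * (2 + a + b) := by nlinarith
  rw [lt_div_iff₀ (by positivity), ← sub_pos (a := 1 - b), hfactor, mul_pos_iff_of_pos_right hpos, sub_pos]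

lemma lt_sqrt_bbmSaddleSq_iff {k t : ℝ} (hk : 0 ≤ k) (ht : 0 < t) :
    k < √(bbmSaddleSq t) ↔ t < (1 - k ^ 2) / (1 + k ^ 2) ^ 2 := by
  rw [lt_sqrt hk]
  exact lt_iff_lt_of_mul_one_add_sq_eq ht.le (neg_one_le_bbmSaddleSq ht.le) (sq_nonneg k)
    (mul_one_add_bbmSaddleSq_sq ht)

lemma div_sq_eq_of_four_mul_sq_eq {ω s : ℝ} (hω : ω ≠ 0) (hs : 4 * ω ^ 2 = 1 - s ^ 2) :
    ((1 - s) / (2 * ω)) ^ 2 = (1 - s) / (1 + s) := by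
  have hs₁ : 1 - s ≠ 0 := fun h => hω (by nlinarith)
  have hs₂ : 1 + s ≠ 0 := fun h => hω (by nlinarith)
  field_simp
  linear_combination -hs

lemma one_sub_sq_div_one_add_sq_sq_of_sq_eq {k s : ℝ} (hs : 1 + s ≠ 0)
    (hk : k ^ 2 = (1 - s) / (1 + s)) : (1 - k ^ 2) / (1 + k ^ 2) ^ 2 = (s ^ 2 + s) / 2 := by
  rw [hk]
  field_simp
  ring

/-- For 0 < ω₀ < 1/2 and 0 < ξ < c_g(ω₀) = (1-4ω₀²+√(1-4ω₀²))/2, the root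
k₂ = (1-√(1-4ω₀²))/(2ω₀) satisfies k₂ < ρ₁(ξ); equivalently, for 0 < ξ < 1,
k₂ < ρ₁(ξ) iff ξ < ω'(k₂). -/
theorem bbm_pole_saddle_comparison (ω₀ ξ : ℝ) (h1 : 0 < ω₀) (h2 : ω₀ < 1/2)
    (h3 : 0 < ξ)
    (h4 : ξ < (1 - 4*ω₀^2 + Real.sqrt (1 - 4*ω₀^2))/2) :
    let k₂ := (1 - Real.sqrt (1 - 4*ω₀^2))/(2*ω₀)
    let ρ₁ := fun t : ℝ => Real.sqrt (-1 + (Real.sqrt (1+8*t) - 1)/(2*t))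
    k₂ < ρ₁ ξ ∧
    (∀ t : ℝ, 0 < t → t < 1 →
      (k₂ < ρ₁ t ↔ t < (1-k₂^2)/(1+k₂^2)^2)) := by
  intro k₂ ρ₁
  set s := √(1 - 4 * ω₀ ^ 2)
  have hs_sq : s ^ 2 = 1 - 4 * ω₀ ^ 2 := sq_sqrt (by nlinarith)
  have hs_le_one : s ≤ 1 := sqrt_le_one.2 (by nlinarith)
  have hk₂ : 0 ≤ k₂ := div_nonneg (by linarith) (by linarith)
  have hk₂_sq : k₂ ^ 2 = (1 - s) / (1 + s) :=
    div_sq_eq_of_four_mul_sq_eq h1.ne' (by linarith)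
  have hvelocity : (1 - k₂ ^ 2) / (1 + k₂ ^ 2) ^ 2 = (1 - 4 * ω₀ ^ 2 + s) / 2 := by
    rw [one_sub_sq_div_one_add_sq_sq_of_sq_eq (by positivity) hk₂_sq, hs_sq]
  have hcompare (t : ℝ) (ht : 0 < t) : k₂ < ρ₁ t ↔ t < (1 - k₂ ^ 2) / (1 + k₂ ^ 2) ^ 2 :=
    lt_sqrt_bbmSaddleSq_iff hk₂ ht
  exact ⟨(hcompare ξ h3).2 (hvelocity ▸ h4), fun t ht _ => hcompare t ht⟩
end
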